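/- Let N = N_1 ∪ ... ∪ N_k be a C*-decomposition of a chemical reaction network containing the zero complex, let k(0) ≥ 1 be the number of subnetworks N_i whose complex set contains the zero complex, let l and l_i denote the numbers of linkage classes of N and of N_i respectively. Then l = 1 + Σ_{i=1}^k l_i − k(0). -/

import Mathlib

open scoped Classical

noncomputable section

/-- A reaction: an ordered pair (reactant complex, product complex) of vectors in ℝ^S. -/
abbrev Rxn (S : Type*) := (S → ℝ) × (S → ℝ)

variable {S : Type*} [Fintype S]

/-- The set of complexes occurring in a reaction set. -/
def complexesOf (R : Finset (Rxn S)) : Finset (S → ℝ) :=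
  R.image Prod.fst ∪ R.image Prod.snd

/-- `(C, R)` is a chemical reaction network on the species set `S`:
complexes have nonnegative integer coordinates, reactions go between complexes,
no reaction is a loop, and every complex occurs in at least one reaction. -/
def IsCRN (C : Finset (S → ℝ)) (R : Finset (Rxn S)) : Prop :=
  C.Nonempty ∧ R.Nonempty ∧
  (∀ y ∈ C, ∀ s, ∃ n : ℕ, y s = (n : ℝ)) ∧
  (∀ r ∈ R, r.1 ∈ C ∧ r.2 ∈ C) ∧
  (∀ r ∈ R, r.1 ≠ r.2) ∧
  (∀ y ∈ C, ∃ r ∈ R, r.1 = y ∨ r.2 = y)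

/-- The stoichiometric subspace `span {y' - y : (y, y') ∈ R}`. -/
def stoichSubspace (R : Finset (Rxn S)) : Submodule ℝ (S → ℝ) :=
  Submodule.span ℝ ((fun r : Rxn S => r.2 - r.1) '' ↑R)

/-- The rank `s = dim S` of the network. -/
def crnRank (R : Finset (Rxn S)) : ℕ := Module.finrank ℝ (stoichSubspace R)

/-- The standard basis vector `ω_y` of the complex space `ℝ^C` (realized inside
the space of real-valued functions on complexes). -/
def omegaC (y : S → ℝ) : (S → ℝ) → ℝ := fun z => if z = y then 1 else 0

/-- The image of the incidence map `I_a`, i.e. the span of the vectors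
`ω_{y'} - ω_y` over reactions `y → y'`. -/
def incImage (R : Finset (Rxn S)) : Submodule ℝ ((S → ℝ) → ℝ) :=
  Submodule.span ℝ ((fun r : Rxn S => omegaC r.2 - omegaC r.1) '' ↑R)

/-- The underlying undirected graph of `(C, R)`, on the complexes occurring in `R`. -/
def linkGraph (R : Finset (Rxn S)) : SimpleGraph {y : S → ℝ // y ∈ complexesOf R} where
  Adj a b := a ≠ b ∧ ((a.1, b.1) ∈ R ∨ (b.1, a.1) ∈ R)
  symm := ⟨fun a b h => ⟨h.1.symm, h.2.symm⟩⟩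
  loopless := ⟨fun a h => h.1 rfl⟩

/-- `n`, the number of complexes. -/
def numComplexes (R : Finset (Rxn S)) : ℕ := (complexesOf R).card

/-- `l`, the number of linkage classes (connected components of the
underlying undirected graph). -/
def numLinkageClasses (R : Finset (Rxn S)) : ℕ :=
  Nat.card (linkGraph R).ConnectedComponent

/-- The deficiency `δ = n - l - s` (as an integer). -/
def deficiency (R : Finset (Rxn S)) : ℤ :=
  (numComplexes R : ℤ) - (numLinkageClasses R : ℤ) - (crnRank R : ℤ)

/-- A covering of the reaction set `R`: a family of subsets of `R` whose union is `R`. -/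
def IsCovering {ι : Type*} (R : Finset (Rxn S)) (f : ι → Finset (Rxn S)) : Prop :=
  (∀ i, f i ⊆ R) ∧ ∀ r ∈ R, ∃ i, r ∈ f i

/-- A decomposition of the reaction set `R`: a partition of `R` into nonempty subsets. -/
def IsDecomposition {ι : Type*} (R : Finset (Rxn S)) (f : ι → Finset (Rxn S)) : Prop :=
  (∀ i, (f i).Nonempty) ∧ (Pairwise fun i j => Disjoint (f i) (f j)) ∧
  (∀ i, f i ⊆ R) ∧ (∀ r ∈ R, ∃ i, r ∈ f i)

/-- Independence: the stoichiometric subspace is the direct sum of those of the subnetworks. -/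
def IsIndependent {ι : Type*} (R : Finset (Rxn S)) (f : ι → Finset (Rxn S)) : Prop :=
  (⨆ i, stoichSubspace (f i)) = stoichSubspace R ∧
  iSupIndep fun i => stoichSubspace (f i)

/-- Incidence independence: the image of the incidence map is the direct sum of the
images of the incidence maps of the subnetworks. -/
def IsIncidenceIndependent {ι : Type*} (R : Finset (Rxn S)) (f : ι → Finset (Rxn S)) : Prop :=
  (⨆ i, incImage (f i)) = incImage R ∧
  iSupIndep fun i => incImage (f i)

/-- A `𝒞`-decomposition: the complex sets of the subnetworks are pairwise disjoint. -/
def CDisjoint {ι : Type*} (f : ι → Finset (Rxn S)) : Prop :=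
  Pairwise fun i j => Disjoint (complexesOf (f i)) (complexesOf (f j))

/-- The set of nonzero complexes of a reaction set. -/
def nonzeroComplexesOf (R : Finset (Rxn S)) : Finset (S → ℝ) := (complexesOf R).erase 0

/-- A `𝒞*`-decomposition: the sets of nonzero complexes are pairwise disjoint. -/
def CstarDisjoint {ι : Type*} (f : ι → Finset (Rxn S)) : Prop :=
  Pairwise fun i j => Disjoint (nonzeroComplexesOf (f i)) (nonzeroComplexesOf (f j))

/-- A coarsening: each block of `f` is contained in exactly one block of `g`. -/
def IsCoarsening {ι κ : Type*} (f : ι → Finset (Rxn S)) (g : κ → Finset (Rxn S)) : Prop :=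
  ∀ i, ∃! j, f i ⊆ g j

/-- Undirected reachability in the graph `(C, R)`. -/
def undirReach (R : Finset (Rxn S)) : (S → ℝ) → (S → ℝ) → Prop :=
  Relation.ReflTransGen fun y z => (y, z) ∈ R ∨ (z, y) ∈ R

/-- Directed reachability in the digraph `(C, R)`. -/
def dirReach (R : Finset (Rxn S)) : (S → ℝ) → (S → ℝ) → Prop :=
  Relation.ReflTransGen fun y z => (y, z) ∈ R

/-- Weak reversibility: every connected component of the directed graph `(C, R)`
is strongly connected. -/
def WeaklyReversible (R : Finset (Rxn S)) : Prop :=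
  ∀ y z, undirReach R y z → dirReach R y z

/-- The set of complex balanced equilibria `Z₊(N, K)` of a kinetics `K` on the
(sub)network with reaction set `R`: positive vectors `x` with `I_a K(x) = 0`. -/
def Zplus (R : Finset (Rxn S)) (K : (S → ℝ) → Rxn S → ℝ) : Set (S → ℝ) :=
  {x | (∀ s, 0 < x s) ∧ ∑ r ∈ R, K x r • (omegaC r.2 - omegaC r.1) = 0}

/-- The reactions lying in the linkage class of the zero complex. -/
def zeroLinkReactions (R : Finset (Rxn S)) : Finset (Rxn S) :=
  R.filter fun r => undirReach R 0 r.1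

/-- The reaction set of the linkage class `c`: all reactions whose complexes lie in `c`. -/
def lcReactions (R : Finset (Rxn S)) (c : (linkGraph R).ConnectedComponent) :
    Finset (Rxn S) :=
  R.filter fun r => ∃ h : r.1 ∈ complexesOf R, (linkGraph R).connectedComponentMk ⟨r.1, h⟩ = c

/-- The network has independent linkage classes (ILC): the linkage class
decomposition is independent. -/
def HasILC (R : Finset (Rxn S)) : Prop := IsIndependent R (lcReactions R)

/-! The linkage classes of `N` not containing `0` are exactly the linkage classes of the
subnetworks `N_i` not containing `0`: a nonzero complex lies in a single `N_i`, so every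
reaction at it belongs to `N_i`, and an undirected path leaving `N_i` must pass through `0`.
Hence the map sending each linkage class of each `N_i` to the linkage class of `N` containing
it has singleton fibres, except over the class of `0`, whose fibre consists of the `k(0)`
classes of `0` in the subnetworks containing it. Counting fibres gives
`Σ l_i = k(0) + (l - 1)`. -/

theorem Nat.card_add_one_eq_of_fibers {α β : Type*} [Finite α] [Finite β] (F : α → β)
    (b₀ : β) (hunique : ∀ b, b ≠ b₀ → ∃! a, F a = b) :
    Nat.card α + 1 = Nat.card {a // F a = b₀} + Nat.card β := by
  have := Fintype.ofFinite β
  have hfiber : ∀ b ∈ Finset.univ.erase b₀, Nat.card {a // F a = b} = 1 := fun b hb =>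
    Nat.card_eq_one_iff_exists.mpr <| by
      obtain ⟨a, ha, huniq⟩ := hunique b (Finset.ne_of_mem_erase hb)
      exact ⟨⟨a, ha⟩, fun a' => Subtype.ext (huniq a'.1 a'.2)⟩
  have hcard : 0 < Fintype.card β := Fintype.card_pos_iff.mpr ⟨b₀⟩
  rw [← Nat.card_congr (Equiv.sigmaFiberEquiv F), Nat.card_sigma,
    ← Finset.add_sum_erase _ _ (Finset.mem_univ b₀), Finset.sum_congr rfl hfiber,
    Finset.sum_const, Finset.card_erase_of_mem (Finset.mem_univ _), Finset.card_univ,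
    smul_eq_mul, mul_one, Nat.card_eq_fintype_card (α := β)]
  omega

section LinkageClasses

variable {R R' : Finset (Rxn S)}

theorem mem_complexesOf_fst {r : Rxn S} (hr : r ∈ R) : r.1 ∈ complexesOf R :=
  Finset.mem_union_left _ (Finset.mem_image_of_mem _ hr)

theorem mem_complexesOf_snd {r : Rxn S} (hr : r ∈ R) : r.2 ∈ complexesOf R :=
  Finset.mem_union_right _ (Finset.mem_image_of_mem _ hr)

theorem mem_complexesOf_iff {y : S → ℝ} : y ∈ complexesOf R ↔ ∃ r ∈ R, r.1 = y ∨ r.2 = y := by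
  simp only [complexesOf, Finset.mem_union, Finset.mem_image]
  constructor
  · rintro (⟨r, hr, rfl⟩ | ⟨r, hr, rfl⟩)
    exacts [⟨r, hr, .inl rfl⟩, ⟨r, hr, .inr rfl⟩]
  · rintro ⟨r, hr, rfl | rfl⟩
    exacts [.inl ⟨r, hr, rfl⟩, .inr ⟨r, hr, rfl⟩]

theorem complexesOf_mono (h : R ⊆ R') : complexesOf R ⊆ complexesOf R' :=
  Finset.union_subset_union (Finset.image_subset_image h) (Finset.image_subset_image h)

omit [Fintype S] in
theorem undirReach.mono (h : R ⊆ R') {y z : S → ℝ} (hyz : undirReach R y z) :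
    undirReach R' y z :=
  Relation.ReflTransGen.mono (fun _ _ => Or.imp (@h _) (@h _)) _ _ hyz

theorem undirReach.mem_complexesOf {y z : S → ℝ} (h : undirReach R y z)
    (hy : y ∈ complexesOf R) : z ∈ complexesOf R := by
  induction h with
  | refl => exact hy
  | tail _ step _ =>
    rcases step with hr | hr
    exacts [mem_complexesOf_snd hr, mem_complexesOf_fst hr]

theorem linkGraph_reachable_iff {y z : S → ℝ} (hy : y ∈ complexesOf R)
    (hz : z ∈ complexesOf R) :
    (linkGraph R).Reachable ⟨y, hy⟩ ⟨z, hz⟩ ↔ undirReach R y z := by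
  constructor
  · suffices ∀ {a b}, (linkGraph R).Walk a b → undirReach R a.1 b.1 from fun ⟨w⟩ => this w
    intro a b w
    induction w with
    | nil => exact .refl
    | cons hadj _ ih => exact .head hadj.2 ih
  · intro h
    induction h with
    | refl => rfl
    | @tail b c hyb step ih =>
      have hb := undirReach.mem_complexesOf hyb hy
      have hc := undirReach.mem_complexesOf (.single step) hb
      refine (ih hb).trans ?_
      by_cases hbc : b = c
      · subst hbc; rfl
      · exact SimpleGraph.Adj.reachable (G := linkGraph R) (u := ⟨b, hb⟩) (v := ⟨c, hc⟩)
          ⟨fun e => hbc (congrArg Subtype.val e), step⟩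

theorem linkGraph_mk_eq_mk_iff {y z : S → ℝ} (hy : y ∈ complexesOf R)
    (hz : z ∈ complexesOf R) :
    (linkGraph R).connectedComponentMk ⟨y, hy⟩ = (linkGraph R).connectedComponentMk ⟨z, hz⟩ ↔
      undirReach R y z :=
  SimpleGraph.ConnectedComponent.eq.trans (linkGraph_reachable_iff hy hz)

def linkGraphHomOfSubset (h : R ⊆ R') : linkGraph R →g linkGraph R' where
  toFun v := ⟨v.1, complexesOf_mono h v.2⟩
  map_rel' hadj := ⟨fun e => hadj.1 (Subtype.ext (Subtype.mk.inj e)), hadj.2.imp (@h _) (@h _)⟩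

end LinkageClasses

section CstarDecomposition

variable {ι : Type*} {R : Finset (Rxn S)} {f : ι → Finset (Rxn S)}

theorem CstarDisjoint.eq_of_mem_complexesOf (hstar : CstarDisjoint f) {y : S → ℝ} (hy : y ≠ 0)
    {i j : ι} (hi : y ∈ complexesOf (f i)) (hj : y ∈ complexesOf (f j)) : i = j := by
  by_contra hij
  exact Finset.disjoint_left.mp (hstar hij) (Finset.mem_erase.mpr ⟨hy, hi⟩)
    (Finset.mem_erase.mpr ⟨hy, hj⟩)

theorem CstarDisjoint.undirReach_or_undirReach_zero (hstar : CstarDisjoint f)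
    (hcov : IsCovering R f) {i : ι} {y z : S → ℝ} (h : undirReach R y z)
    (hy : y ∈ complexesOf (f i)) : undirReach (f i) y z ∨ undirReach (f i) y 0 := by
  induction h using Relation.ReflTransGen.head_induction_on with
  | refl => exact .inl .refl
  | @head a c step _ ih =>
    by_cases ha : a = 0
    · exact .inr (ha ▸ .refl)
    have hstep : (a, c) ∈ f i ∨ (c, a) ∈ f i := by
      rcases step with hr | hr <;> obtain ⟨m, hm⟩ := hcov.2 _ hr
      · exact .inl (hstar.eq_of_mem_complexesOf ha hy (mem_complexesOf_fst hm) ▸ hm)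
      · exact .inr (hstar.eq_of_mem_complexesOf ha hy (mem_complexesOf_snd hm) ▸ hm)
    have hc := undirReach.mem_complexesOf (.single hstep) hy
    exact (ih hc).imp (.head hstep) (.head hstep)

def IsCovering.linkageClassMap (hcov : IsCovering R f) :
    (Σ i, (linkGraph (f i)).ConnectedComponent) → (linkGraph R).ConnectedComponent :=
  fun p => p.2.map (linkGraphHomOfSubset (hcov.1 p.1))

theorem IsCovering.linkageClassMap_mk (hcov : IsCovering R f) (i : ι)
    (v : {y // y ∈ complexesOf (f i)}) :
    hcov.linkageClassMap ⟨i, (linkGraph (f i)).connectedComponentMk v⟩ =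
      (linkGraph R).connectedComponentMk ⟨v.1, complexesOf_mono (hcov.1 i) v.2⟩ :=
  rfl

namespace CstarDisjoint

variable (hstar : CstarDisjoint f) (hcov : IsCovering R f) (h0 : (0 : S → ℝ) ∈ complexesOf R)
include hstar hcov

theorem linkageClassMap_eq_zeroClass_iff (i : ι) (c : (linkGraph (f i)).ConnectedComponent) :
    hcov.linkageClassMap ⟨i, c⟩ = (linkGraph R).connectedComponentMk ⟨0, h0⟩ ↔
      ∃ h : (0 : S → ℝ) ∈ complexesOf (f i), c = (linkGraph (f i)).connectedComponentMk ⟨0, h⟩ := by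
  induction c using SimpleGraph.ConnectedComponent.ind with | h v => ?_
  rw [hcov.linkageClassMap_mk, linkGraph_mk_eq_mk_iff]
  constructor
  · intro h
    have hv0 : undirReach (f i) v 0 := (hstar.undirReach_or_undirReach_zero hcov h v.2).elim id id
    have h0i := undirReach.mem_complexesOf hv0 v.2
    exact ⟨h0i, (linkGraph_mk_eq_mk_iff v.2 h0i).mpr hv0⟩
  · rintro ⟨h0i, hv⟩
    exact undirReach.mono (hcov.1 i) ((linkGraph_mk_eq_mk_iff v.2 h0i).mp hv)

theorem card_linkageClassMap_fiber_zeroClass :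
    Nat.card {p // hcov.linkageClassMap p = (linkGraph R).connectedComponentMk ⟨0, h0⟩} =
      Nat.card {i // (0 : S → ℝ) ∈ complexesOf (f i)} := by
  have hfiber := hstar.linkageClassMap_eq_zeroClass_iff hcov h0
  refine Nat.card_eq_of_bijective (fun p => ⟨p.1.1, ((hfiber _ p.1.2).mp p.2).1⟩) ⟨?_, ?_⟩
  · rintro ⟨⟨i, c⟩, hc⟩ ⟨⟨j, d⟩, hd⟩ hij
    obtain rfl : i = j := congrArg Subtype.val hij
    obtain ⟨_, rfl⟩ := (hfiber _ c).mp hc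
    obtain ⟨_, rfl⟩ := (hfiber _ d).mp hd
    rfl
  · rintro ⟨i, hi⟩
    exact ⟨⟨⟨i, _⟩, (hfiber _ _).mpr ⟨hi, rfl⟩⟩, rfl⟩

theorem existsUnique_linkageClassMap_eq (K : (linkGraph R).ConnectedComponent)
    (hK : K ≠ (linkGraph R).connectedComponentMk ⟨0, h0⟩) :
    ∃! p, hcov.linkageClassMap p = K := by
  induction K using SimpleGraph.ConnectedComponent.ind with | h v => ?_
  have hv0 : v.1 ≠ 0 := fun h => hK (congrArg _ (Subtype.ext h))
  obtain ⟨i, hi⟩ : ∃ i, v.1 ∈ complexesOf (f i) := by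
    obtain ⟨r, hr, hrv⟩ := mem_complexesOf_iff.mp v.2
    obtain ⟨i, hri⟩ := hcov.2 r hr
    exact ⟨i, mem_complexesOf_iff.mpr ⟨r, hri, hrv⟩⟩
  refine ⟨⟨i, (linkGraph (f i)).connectedComponentMk ⟨v.1, hi⟩⟩, rfl, ?_⟩
  rintro ⟨j, c⟩ hc
  induction c using SimpleGraph.ConnectedComponent.ind with | h w => ?_
  rw [hcov.linkageClassMap_mk] at hc
  have hwv : undirReach (f j) w v := by
    refine (hstar.undirReach_or_undirReach_zero hcov ((linkGraph_mk_eq_mk_iff _ _).mp hc)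
      w.2).resolve_right fun hw0 => hK ?_
    rw [← hc, linkGraph_mk_eq_mk_iff]
    exact undirReach.mono (hcov.1 j) hw0
  obtain rfl := hstar.eq_of_mem_complexesOf hv0 (undirReach.mem_complexesOf hwv w.2) hi
  exact congrArg (Sigma.mk j) ((linkGraph_mk_eq_mk_iff w.2 hi).mpr hwv)

include h0 in
theorem numLinkageClasses_add_card_eq [Fintype ι] :
    numLinkageClasses R + (Finset.univ.filter fun i => (0 : S → ℝ) ∈ complexesOf (f i)).card =
      1 + ∑ i, numLinkageClasses (f i) := by
  have hcount := Nat.card_add_one_eq_of_fibers hcov.linkageClassMap _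
    (hstar.existsUnique_linkageClassMap_eq hcov h0)
  rw [hstar.card_linkageClassMap_fiber_zeroClass hcov h0, Nat.card_sigma,
    Nat.card_eq_fintype_card, Fintype.card_subtype] at hcount
  unfold numLinkageClasses
  omega

end CstarDisjoint

end CstarDecomposition

theorem stmt_17_general (C : Finset (S → ℝ)) (R : Finset (Rxn S)) {k : ℕ}
    (f : Fin k → Finset (Rxn S)) (hcrn : IsCRN C R) (h0 : (0 : S → ℝ) ∈ C)
    (hdec : IsDecomposition R f) (hstar : CstarDisjoint f)
    (k0 : ℕ)
    (hk0 : k0 = (Finset.univ.filter fun i => (0 : S → ℝ) ∈ complexesOf (f i)).card) :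
    (numLinkageClasses R : ℤ) =
      1 + (∑ i, (numLinkageClasses (f i) : ℤ)) - (k0 : ℤ) := by
  obtain ⟨-, -, -, -, -, hocc⟩ := hcrn
  have h0R : (0 : S → ℝ) ∈ complexesOf R := mem_complexesOf_iff.mpr (hocc 0 h0)
  have hcount := congrArg (Nat.cast : ℕ → ℤ)
    (hstar.numLinkageClasses_add_card_eq ⟨hdec.2.2.1, hdec.2.2.2⟩ h0R)
  push_cast at hcount
  omega

/-- for a C*-decomposition of a network containing the zero complex,
with k(0) ≥ 1 the number of subnetworks containing the zero complex,
l = 1 + Σ l_i - k(0). -/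
theorem stmt_17 (C : Finset (S → ℝ)) (R : Finset (Rxn S)) {k : ℕ}
    (f : Fin k → Finset (Rxn S)) (hcrn : IsCRN C R) (h0 : (0 : S → ℝ) ∈ C)
    (hdec : IsDecomposition R f) (hstar : CstarDisjoint f)
    (k0 : ℕ)
    (hk0 : k0 = (Finset.univ.filter fun i => (0 : S → ℝ) ∈ complexesOf (f i)).card)
    (hk0pos : 1 ≤ k0) :
    (numLinkageClasses R : ℤ) =
      1 + (∑ i, (numLinkageClasses (f i) : ℤ)) - (k0 : ℤ) :=
  stmt_17_general C R f hcrn h0 hdec hstar k0 hk0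

end
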